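/- arXiv:1501.07251 — 2 statements merged into one kernel-verified Lean document; each statement's English description precedes it below -/
import Mathlib

section
/- Let C ∈ ℝ^{K×R} with k_C = K ≤ R, set m = R − K + 2, let l ≥ 0, and let F ∈ ℝ^{K×C(R,K−1)} satisfy (P1)–(P2) with respect to C. Then ker(S_{m+l}(C)^T) ∩ S^{m+l}(ℝ^{K^{m+l}}) = range(F^{(m+l)}). -/
open scoped BigOperators
open Matrix

namespace CPD

/-- `T = [A,B,C]_R` : a polyadic decomposition of the `I × J × K` tensor `T`. -/
def IsPD {I J K R : ℕ} (T : Fin I → Fin J → Fin K → ℝ)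
    (A : Matrix (Fin I) (Fin R) ℝ) (B : Matrix (Fin J) (Fin R) ℝ)
    (C : Matrix (Fin K) (Fin R) ℝ) : Prop :=
  ∀ i j k, T i j k = ∑ r : Fin R, A i r * B j r * C k r

/-- The tensor rank: the minimal `R` admitting a polyadic decomposition. -/
noncomputable def tensorRank {I J K : ℕ} (T : Fin I → Fin J → Fin K → ℝ) : ℕ :=
  sInf {R : ℕ | ∃ (A : Matrix (Fin I) (Fin R) ℝ) (B : Matrix (Fin J) (Fin R) ℝ)
      (C : Matrix (Fin K) (Fin R) ℝ), IsPD T A B C}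

/-- Uniqueness of the CPD `T = [A,B,C]_R`: every rank-`R` polyadic decomposition
consists of the same rank-1 terms up to permutation. -/
def CPDUnique {I J K R : ℕ} (T : Fin I → Fin J → Fin K → ℝ)
    (A : Matrix (Fin I) (Fin R) ℝ) (B : Matrix (Fin J) (Fin R) ℝ)
    (C : Matrix (Fin K) (Fin R) ℝ) : Prop :=
  ∀ (A' : Matrix (Fin I) (Fin R) ℝ) (B' : Matrix (Fin J) (Fin R) ℝ)
    (C' : Matrix (Fin K) (Fin R) ℝ), IsPD T A' B' C' →
    ∃ π : Equiv.Perm (Fin R), ∀ (r : Fin R) (i : Fin I) (j : Fin J) (k : Fin K),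
      A' i r * B' j r * C' k r = A i (π r) * B j (π r) * C k (π r)

/-- Uniqueness of the third factor matrix of `T`. -/
def ThirdFactorUnique {I J K R : ℕ} (T : Fin I → Fin J → Fin K → ℝ)
    (C : Matrix (Fin K) (Fin R) ℝ) : Prop :=
  ∀ (A' : Matrix (Fin I) (Fin R) ℝ) (B' : Matrix (Fin J) (Fin R) ℝ)
    (C' : Matrix (Fin K) (Fin R) ℝ), IsPD T A' B' C' →
    ∃ (π : Equiv.Perm (Fin R)) (lam : Fin R → ℝ),
      (∀ r, lam r ≠ 0) ∧ ∀ (k : Fin K) (r : Fin R), C' k r = lam r * C k (π r)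

/-- The k-rank of a matrix: the largest `k` such that every `k` columns are
linearly independent. -/
noncomputable def kRank {n R : ℕ} (M : Matrix (Fin n) (Fin R) ℝ) : ℕ :=
  sSup {k : ℕ | k ≤ R ∧ ∀ s : Finset (Fin R), s.card = k →
    LinearIndependent ℝ (fun r : {x // x ∈ s} => Mᵀ (r : Fin R))}

/-- A matrix has full column rank iff its columns are linearly independent. -/
def FullColRank {α : Type*} {n : ℕ} (M : Matrix α (Fin n) ℝ) : Prop :=
  LinearIndependent ℝ (fun r : Fin n => Mᵀ r)

/-- Khatri–Rao product `A ⊙ B`, with columns `aᵣ ⊗ bᵣ`. -/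
def khatriRao {I J R : ℕ} (A : Matrix (Fin I) (Fin R) ℝ) (B : Matrix (Fin J) (Fin R) ℝ) :
    Matrix (Fin I × Fin J) (Fin R) ℝ :=
  fun ij r => A ij.1 r * B ij.2 r

/-- `n`-fold Khatri–Rao power `F^{(n)} = F ⊙ ⋯ ⊙ F`. -/
def krPow {K N : ℕ} (F : Matrix (Fin K) (Fin N) ℝ) (n : ℕ) :
    Matrix (Fin n → Fin K) (Fin N) ℝ :=
  fun k c => ∏ p : Fin n, F (k p) c

/-- The matrix `R_{m,l}(T)`. -/
noncomputable def Rml {I J K : ℕ} (m l : ℕ) (T : Fin I → Fin J → Fin K → ℝ) :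
    Matrix ((Fin (m + l) → Fin I) × (Fin (m + l) → Fin J)) (Fin (m + l) → Fin K) ℝ :=
  fun ij k =>
    (1 / (Nat.factorial m * Nat.factorial (m + l) : ℝ)) *
      ∑ σ : Equiv.Perm (Fin (m + l)),
        Matrix.det (Matrix.of fun p q : Fin m =>
            T (ij.1 (Fin.castAdd l p)) (ij.2 (Fin.castAdd l q)) (k (σ (Fin.castAdd l q)))) *
        ∏ u : Fin l,
          T (ij.1 (Fin.natAdd m u)) (ij.2 (Fin.natAdd m u)) (k (σ (Fin.natAdd m u)))

/-- Nondecreasing `(m+l)`-tuples with values in `{1,…,R}` taking at least `m`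
distinct values: the column index set of `Φ_{m,l}` and `S_{m+l}`. -/
def IsTupleIdx (m : ℕ) {n R : ℕ} (r : Fin n → Fin R) : Prop :=
  (∀ a b : Fin n, a ≤ b → r a ≤ r b) ∧ m ≤ (Finset.image r Finset.univ).card

instance (m : ℕ) {n R : ℕ} : DecidablePred (IsTupleIdx m (n := n) (R := R)) := fun _r =>
  instDecidableAnd

/-- Column index type for `Φ_{m,l}` and `S_{m+l}`. -/
abbrev TupleIdx (m l R : ℕ) := {r : Fin (m + l) → Fin R // IsTupleIdx m r}

/-- The matrix `Φ_{m,l}(A,B)`. -/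
noncomputable def Phi {I J R : ℕ} (m l : ℕ) (A : Matrix (Fin I) (Fin R) ℝ)
    (B : Matrix (Fin J) (Fin R) ℝ) :
    Matrix ((Fin (m + l) → Fin I) × (Fin (m + l) → Fin J)) (TupleIdx m l R) ℝ :=
  fun ij r =>
    (1 / (Nat.factorial m : ℝ) ^ 2) *
      ∑ σ : Equiv.Perm (Fin (m + l)),
        Matrix.det (Matrix.of fun p q : Fin m =>
            A (ij.1 (Fin.castAdd l p)) (r.1 (σ (Fin.castAdd l q)))) *
        Matrix.det (Matrix.of fun p q : Fin m =>
            B (ij.2 (Fin.castAdd l p)) (r.1 (σ (Fin.castAdd l q)))) *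
        ∏ u : Fin l,
          A (ij.1 (Fin.natAdd m u)) (r.1 (σ (Fin.natAdd m u))) *
          B (ij.2 (Fin.natAdd m u)) (r.1 (σ (Fin.natAdd m u)))

/-- The matrix `S_{m+l}(C)`. -/
noncomputable def Sml {K R : ℕ} (m l : ℕ) (C : Matrix (Fin K) (Fin R) ℝ) :
    Matrix (Fin (m + l) → Fin K) (TupleIdx m l R) ℝ :=
  fun k r =>
    (1 / (Nat.factorial (m + l) : ℝ)) *
      ∑ σ : Equiv.Perm (Fin (m + l)), ∏ p : Fin (m + l), C (k p) (r.1 (σ p))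

/-- `S^n(ℝ^{K^n})`: span of the vectors `x ⊗ ⋯ ⊗ x` (vectorized symmetric tensors). -/
def symSpan (K n : ℕ) : Submodule ℝ ((Fin n → Fin K) → ℝ) :=
  Submodule.span ℝ {v | ∃ x : Fin K → ℝ, v = fun k => ∏ p : Fin n, x (k p)}

/-- `F` satisfies (P1)–(P2) with respect to `C`. -/
def SatisfiesP1P2 {K R N : ℕ} (C : Matrix (Fin K) (Fin R) ℝ)
    (F : Matrix (Fin K) (Fin N) ℝ) : Prop :=
  (∀ c : Fin N, Nat.card {r : Fin R // ∑ k, F k c * C k r = 0} = K - 1) ∧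
  (∀ x : Fin K → ℝ, Nat.card {r : Fin R // ∑ k, x k * C k r = 0} = K - 1 →
    ∃ (c : Fin N) (t : ℝ), x = t • fun k => F k c)

/-- Condition (W_m) for the triplet `(A, B, C)`. -/
def CondW {I J K R : ℕ} (m : ℕ) (A : Matrix (Fin I) (Fin R) ℝ)
    (B : Matrix (Fin J) (Fin R) ℝ) (C : Matrix (Fin K) (Fin R) ℝ) : Prop :=
  ∀ lam : Fin R → ℝ, (∃ x : Fin K → ℝ, lam = Cᵀ.mulVec x) →
    (A * Matrix.diagonal lam * Bᵀ).rank ≤ m - 1 →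
    Nat.card {r : Fin R // lam r ≠ 0} ≤ m - 1


section Aux
variable {K R : ℕ} (C : Matrix (Fin K) (Fin R) ℝ)




/-- tensor power of a vector -/
def pw (n : ℕ) (x : Fin K → ℝ) : (Fin n → Fin K) → ℝ := fun k => ∏ p, x (k p)

lemma pw_cons (d : ℕ) (x : Fin K → ℝ) (t : Fin K) (k : Fin d → Fin K) :
    pw (d+1) x (Fin.cons t k) = x t * pw d x k := by
  simp [pw, Fin.prod_univ_succ]

lemma pw_ne_zero {n : ℕ} {x : Fin K → ℝ} (hx : x ≠ 0) : pw n x ≠ 0 := by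
  obtain ⟨t, ht⟩ := Function.ne_iff.1 hx
  intro h
  have h2 := congrFun h (fun _ => t)
  simp only [pw, Pi.zero_apply] at h2
  rw [Finset.prod_const] at h2
  exact pow_ne_zero _ ht (by simpa using h2)

lemma sum_pw_prod (d : ℕ) (x : Fin K → ℝ) (g : Fin d → Fin K → ℝ) :
    ∑ k : Fin d → Fin K, pw d x k * ∏ p, g p (k p) = ∏ p, (∑ t, x t * g p t) := by
  rw [Finset.prod_univ_sum]
  rw [Fintype.piFinset_univ]
  apply Finset.sum_congr rfl
  intro k _
  rw [pw, ← Finset.prod_mul_distrib]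



/-- every `K` columns are linearly independent -/
def LIK (C : Matrix (Fin K) (Fin R) ℝ) : Prop :=
  ∀ s : Finset (Fin R), s.card = K →
    LinearIndependent ℝ (fun r : {x // x ∈ s} => Cᵀ (r : Fin R))

lemma col_rep (hK1 : 1 ≤ K) (hLI : LIK C) (T : Finset (Fin R)) (hT : K ≤ T.card)
    (y : Fin K → ℝ) : ∃ a : Fin R → ℝ, ∀ t, y t = ∑ j ∈ T, a j * C t j := by
  obtain ⟨T₀, hT₀sub, hT₀card⟩ := Finset.exists_subset_card_eq hT
  have hne : T₀.Nonempty := Finset.card_pos.1 (by omega)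
  have : Nonempty {x // x ∈ T₀} := ⟨⟨hne.choose, hne.choose_spec⟩⟩
  have hli := hLI T₀ hT₀card
  have hcard : Fintype.card {x // x ∈ T₀} = Module.finrank ℝ (Fin K → ℝ) := by
    rw [Fintype.card_coe, hT₀card, Module.finrank_pi, Fintype.card_fin]
  have hspan := hli.span_eq_top_of_card_eq_finrank hcard
  have hy : y ∈ Submodule.span ℝ (Set.range (fun r : {x // x ∈ T₀} => Cᵀ (r : Fin R))) := by
    rw [hspan]; trivial
  rw [Submodule.mem_span_range_iff_exists_fun] at hy
  obtain ⟨c, hc⟩ := hy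
  classical
  refine ⟨fun j => if h : j ∈ T₀ then c ⟨j, h⟩ else 0, fun t => ?_⟩
  have : ∑ j ∈ T, (if h : j ∈ T₀ then c ⟨j, h⟩ else 0) * C t j
      = ∑ j ∈ T₀, (if h : j ∈ T₀ then c ⟨j, h⟩ else 0) * C t j := by
    refine (Finset.sum_subset hT₀sub ?_).symm
    intro j _ hj; simp [hj]
  rw [this]
  rw [← Finset.sum_attach T₀ (fun j => (if h : j ∈ T₀ then c ⟨j, h⟩ else 0) * C t j)]
  have := congrFun hc t
  simp only [Finset.sum_apply, Pi.smul_apply, smul_eq_mul] at this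
  rw [← this]
  apply Finset.sum_congr rfl
  intro j _
  simp [j.2, Matrix.transpose_apply]

lemma eq_zero_of_dt_cols (hK1 : 1 ≤ K) (hLI : LIK C) (T : Finset (Fin R))
    (hT : K ≤ T.card) (φ : Fin K → ℝ)
    (h : ∀ j ∈ T, ∑ t, C t j * φ t = 0) : φ = 0 := by
  funext t'
  obtain ⟨a, ha⟩ := col_rep C hK1 hLI T hT (Pi.single t' 1)
  have h1 : φ t' = ∑ t, (Pi.single t' 1 : Fin K → ℝ) t * φ t := by
    rw [Finset.sum_eq_single t']
    · simp
    · intro b _ hb; simp [Pi.single_apply, hb]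
    · intro h; exact absurd (Finset.mem_univ t') h
  rw [h1]
  calc ∑ t, (Pi.single t' 1 : Fin K → ℝ) t * φ t = ∑ t, (∑ j ∈ T, a j * C t j) * φ t := by
        apply Finset.sum_congr rfl; intro t _; rw [← ha t]
    _ = ∑ j ∈ T, a j * ∑ t, C t j * φ t := by
        simp only [Finset.sum_mul]
        rw [Finset.sum_comm]
        apply Finset.sum_congr rfl; intro j _
        rw [Finset.mul_sum]
        apply Finset.sum_congr rfl; intro t _; ring
    _ = 0 := by
        apply Finset.sum_eq_zero; intro j hj; rw [h j hj, mul_zero]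



lemma sum_cons_split {X : Type*} [AddCommMonoid X] (n : ℕ)
    (g : (Fin (n+1) → Fin K) → X) :
    ∑ k : Fin (n+1) → Fin K, g k = ∑ t : Fin K, ∑ k' : Fin n → Fin K, g (Fin.cons t k') := by
  rw [← Equiv.sum_comp (Fin.consEquiv (fun _ => Fin K)) g, Fintype.sum_prod_type]
  rfl

lemma pairzero (hK1 : 1 ≤ K) (hLI : LIK C) (T : Finset (Fin R)) (hT : K ≤ T.card) :
    ∀ (n : ℕ) (w : (Fin n → Fin K) → ℝ),
      (∀ s : Fin n → Fin R, (∀ p, s p ∈ T) →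
        ∑ k : Fin n → Fin K, w k * ∏ p, C (k p) (s p) = 0) → w = 0 := by
  intro n
  induction n with
  | zero =>
      intro w h
      have h0 := h (fun p => p.elim0) (fun p => p.elim0)
      simp only [Finset.univ_unique, Finset.sum_singleton] at h0
      funext k
      have hk : k = default := Subsingleton.elim _ _
      rw [hk]
      simpa using h0
  | succ n ih =>
      intro w h
      have key : ∀ (t : Fin K) (k' : Fin n → Fin K), w (Fin.cons t k') = 0 := by
        intro t
        have : (fun k' : Fin n → Fin K => w (Fin.cons t k')) = 0 := by
          apply ih
          intro s' hs'
          -- φ t' := ∑_{k'} w (cons t' k') * ∏ C (k' p) (s' p) ; show φ = 0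
          set φ : Fin K → ℝ :=
            fun t' => ∑ k' : Fin n → Fin K, w (Fin.cons t' k') * ∏ p, C (k' p) (s' p) with hφ
          have hφ0 : φ = 0 := by
            apply eq_zero_of_dt_cols C hK1 hLI T hT
            intro j hj
            have hh := h (Fin.cons j s') (by
              intro p
              refine Fin.cases ?_ ?_ p
              · simpa using hj
              · intro q; simpa using hs' q)
            rw [sum_cons_split] at hh
            rw [← hh]
            apply Finset.sum_congr rfl
            intro t' _
            rw [hφ, Finset.mul_sum]
            apply Finset.sum_congr rfl
            intro k' _
            rw [Fin.prod_univ_succ]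
            simp only [Fin.cons_zero, Fin.cons_succ]
            ring
          exact congrFun hφ0 t
        exact fun k' => congrFun this k'
      funext k
      have : k = Fin.cons (k 0) (Fin.tail k) := (Fin.cons_self_tail k).symm
      rw [this]
      exact key _ _



/-- contraction of a "sum of powers" representation against column `j` -/
lemma ctr_rep {ι : Type*} (s : Finset ι) (d : ℕ) (j : Fin R)
    (a : ι → ℝ) (x : ι → Fin K → ℝ) (k' : Fin d → Fin K) :
    ∑ t, C t j * (∑ i ∈ s, a i * pw (d+1) (x i) (Fin.cons t k'))
      = ∑ i ∈ s, (a i * (∑ t, x i t * C t j)) * pw d (x i) k' := by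
  simp only [Finset.mul_sum]
  rw [Finset.sum_comm]
  apply Finset.sum_congr rfl
  intro i _
  simp only [pw_cons, Finset.sum_mul]
  apply Finset.sum_congr rfl
  intro t _
  ring

lemma indep (hK1 : 1 ≤ K) (f : Finset (Fin R) → Fin K → ℝ)
    (hf0 : ∀ S : Finset (Fin R), S.card = K - 1 → f S ≠ 0)
    (hforth : ∀ S : Finset (Fin R), S.card = K - 1 → ∀ r ∈ S, (∑ t, f S t * C t r) = 0)
    (hfnz : ∀ S : Finset (Fin R), S.card = K - 1 → ∀ j, j ∉ S → (∑ t, f S t * C t j) ≠ 0) :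
    ∀ (J : Finset (Fin R)) (d : ℕ) (μ : Finset (Fin R) → ℝ) (S₀ : Finset (Fin R)),
      J.card ≤ d → S₀.card = K - 1 →
      (∀ S, μ S ≠ 0 → S.card = K - 1) →
      (∀ S, μ S ≠ 0 → S ≠ S₀ → (S ∩ J).Nonempty) →
      S₀ ∩ J = ∅ →
      (∀ k : Fin d → Fin K, ∑ S : Finset (Fin R), μ S * pw d (f S) k = 0) →
      μ S₀ = 0 := by
  classical
  intro J
  induction J using Finset.induction with
  | empty =>
      intro d μ S₀ _ hS₀card _ hinter _ hsum
      by_contra hne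
      have hall : ∀ k : Fin d → Fin K, μ S₀ * pw d (f S₀) k = 0 := by
        intro k
        have := hsum k
        rwa [Fintype.sum_eq_single S₀ (fun S hS => ?_)] at this
        by_cases h0 : μ S = 0
        · rw [h0, zero_mul]
        · exact absurd (hinter S h0 hS) (by simp)
      have : pw d (f S₀) = 0 := by
        funext k
        have := hall k
        rcases mul_eq_zero.1 this with h | h
        · exact absurd h hne
        · exact h
      exact pw_ne_zero (hf0 S₀ hS₀card) this
  | @insert a J' ha ih =>
      intro d μ S₀ hcard hS₀card hsupp hinter hdisj hsum
      have hd : 1 ≤ d := le_trans (by simp [Finset.card_insert_of_notMem ha]) hcard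
      obtain ⟨d', rfl⟩ : ∃ d', d = d' + 1 := ⟨d - 1, by omega⟩
      have haS₀ : a ∉ S₀ := by
        intro hmem
        have : a ∈ S₀ ∩ insert a J' := Finset.mem_inter.2 ⟨hmem, Finset.mem_insert_self _ _⟩
        rw [hdisj] at this; exact absurd this (Finset.notMem_empty a)
      have hsum' : ∀ k' : Fin d' → Fin K,
          ∑ S : Finset (Fin R), (μ S * (∑ t, f S t * C t a)) * pw d' (f S) k' = 0 := by
        intro k'
        rw [← ctr_rep C Finset.univ d' a μ f k']
        apply Finset.sum_eq_zero
        intro t _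
        rw [hsum (Fin.cons t k'), mul_zero]
      have hres := ih d' (fun S => μ S * (∑ t, f S t * C t a)) S₀
        (by rw [Finset.card_insert_of_notMem ha] at hcard; omega)
        hS₀card
        (fun S hS => hsupp S (fun h0 => hS (by simp [h0])))
        (fun S hS hSne => by
          have hμ : μ S ≠ 0 := fun h0 => hS (by simp [h0])
          have hdt : (∑ t, f S t * C t a) ≠ 0 := fun h0 => hS (by simp [h0])
          have hanotS : a ∉ S := by
            intro hmem; exact hdt (hforth S (hsupp S hμ) a hmem)
          obtain ⟨sE, hsE⟩ := hinter S hμ hSne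
          rw [Finset.mem_inter] at hsE
          refine ⟨sE, Finset.mem_inter.2 ⟨hsE.1, ?_⟩⟩
          rcases Finset.mem_insert.1 hsE.2 with h | h
          · exact absurd (h ▸ hsE.1) hanotS
          · exact h)
        (by
          rw [Finset.eq_empty_iff_forall_notMem]
          intro x hx
          rw [Finset.mem_inter] at hx
          have : x ∈ S₀ ∩ insert a J' :=
            Finset.mem_inter.2 ⟨hx.1, Finset.mem_insert_of_mem hx.2⟩
          rw [hdisj] at this; exact absurd this (Finset.notMem_empty x))
        hsum'
      have hdta : (∑ t, f S₀ t * C t a) ≠ 0 := hfnz S₀ hS₀card a haS₀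
      exact (mul_eq_zero.1 hres).resolve_right hdta



lemma span_rep (n : ℕ) (f : Finset (Fin R) → Fin K → ℝ)
    (pred : Finset (Fin R) → Prop) (v : (Fin n → Fin K) → ℝ)
    (hv : v ∈ Submodule.span ℝ {w | ∃ S : Finset (Fin R), pred S ∧ w = pw n (f S)}) :
    ∃ β : Finset (Fin R) → ℝ, (∀ S, β S ≠ 0 → pred S) ∧
      ∀ k, v k = ∑ S : Finset (Fin R), β S * pw n (f S) k := by
  classical
  induction hv using Submodule.span_induction with
  | mem w hw =>
      obtain ⟨S, hS, rfl⟩ := hw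
      refine ⟨fun S' => if S' = S then 1 else 0, fun S' h => ?_, fun k => ?_⟩
      · by_cases hSS : S' = S
        · rw [hSS]; exact hS
        · simp [hSS] at h
      · rw [Finset.sum_eq_single S]
        · simp
        · intro b _ hb; simp [hb]
        · intro h; exact absurd (Finset.mem_univ S) h
  | zero => exact ⟨0, by simp, by simp⟩
  | add x y _ _ hx hy =>
      obtain ⟨β₁, hs₁, he₁⟩ := hx
      obtain ⟨β₂, hs₂, he₂⟩ := hy
      refine ⟨β₁ + β₂, fun S h => ?_, fun k => ?_⟩
      · by_cases h1 : β₁ S = 0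
        · apply hs₂; intro h2; apply h; simp [h1, h2]
        · exact hs₁ S h1
      · simp only [Pi.add_apply, he₁ k, he₂ k, add_mul, ← Finset.sum_add_distrib]
  | smul a x _ hx =>
      obtain ⟨β, hs, he⟩ := hx
      refine ⟨a • β, fun S h => hs S (fun h0 => h (by simp [h0])), fun k => ?_⟩
      simp only [Pi.smul_apply, smul_eq_mul, he k, Finset.mul_sum]
      apply Finset.sum_congr rfl
      intro S _
      ring

lemma span_of_rep (n : ℕ) (f : Finset (Fin R) → Fin K → ℝ)
    (pred : Finset (Fin R) → Prop) (γ : Finset (Fin R) → ℝ)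
    (hγ : ∀ S, γ S ≠ 0 → pred S) :
    (fun k : Fin n → Fin K => ∑ S : Finset (Fin R), γ S * pw n (f S) k)
      ∈ Submodule.span ℝ {w | ∃ S : Finset (Fin R), pred S ∧ w = pw n (f S)} := by
  classical
  have : (fun k : Fin n → Fin K => ∑ S : Finset (Fin R), γ S * pw n (f S) k)
      = ∑ S : Finset (Fin R), γ S • pw n (f S) := by
    funext k; rw [Finset.sum_apply]; rfl
  rw [this]
  apply Submodule.sum_mem
  intro S _
  by_cases h : γ S = 0
  · rw [h, zero_smul]; exact Submodule.zero_mem _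
  · exact Submodule.smul_mem _ _ (Submodule.subset_span ⟨S, hγ S h, rfl⟩)



lemma prod_orderEmb {α : Type*} [LinearOrder α] {M : Type*} [CommMonoid M]
    (s : Finset α) {k : ℕ} (h : s.card = k) (g : α → M) :
    ∏ u : Fin k, g (s.orderEmbOfFin h u) = ∏ a ∈ s, g a := by
  apply Finset.prod_bij (fun (u : Fin k) _ => s.orderEmbOfFin h u)
  · intro u _; exact s.orderEmbOfFin_mem h u
  · intro u _ u' _ he; exact (s.orderEmbOfFin h).injective he
  · intro a ha
    have : a ∈ Set.range (s.orderEmbOfFin h) := by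
      rw [Finset.range_orderEmbOfFin]; exact ha
    obtain ⟨u, hu⟩ := this
    exact ⟨u, Finset.mem_univ u, hu⟩
  · intro u _; rfl



lemma pair_rep {ι : Type*} (s : Finset ι) (n : ℕ) (a : ι → ℝ)
    (x : ι → Fin K → ℝ) (sp : Fin n → Fin R) :
    ∑ k : Fin n → Fin K, (∑ i ∈ s, a i * pw n (x i) k) * ∏ p, C (k p) (sp p)
      = ∑ i ∈ s, a i * ∏ p, (∑ u, x i u * C u (sp p)) := by
  simp only [Finset.sum_mul]
  rw [Finset.sum_comm]
  apply Finset.sum_congr rfl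
  intro i _
  calc ∑ k : Fin n → Fin K, a i * pw n (x i) k * ∏ p, C (k p) (sp p)
      = a i * ∑ k : Fin n → Fin K, pw n (x i) k * ∏ p, C (k p) (sp p) := by
        rw [Finset.mul_sum]; apply Finset.sum_congr rfl; intro k _; ring
    _ = a i * ∏ p, (∑ u, x i u * C u (sp p)) := by
        rw [sum_pw_prod n (x i) (fun p u => C u (sp p))]



theorem core (hK1 : 1 ≤ K) (hLI : LIK C)
    (f : Finset (Fin R) → Fin K → ℝ)
    (hf0 : ∀ S : Finset (Fin R), S.card = K - 1 → f S ≠ 0)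
    (hforth : ∀ S : Finset (Fin R), S.card = K - 1 → ∀ r ∈ S, (∑ s, f S s * C s r) = 0)
    (hfnz : ∀ S : Finset (Fin R), S.card = K - 1 → ∀ j, j ∉ S → (∑ s, f S s * C s j) ≠ 0) :
    ∀ (t : ℕ) (T : Finset (Fin R)), T.card = K + t →
    ∀ (l n : ℕ), n = t + 2 + l →
    ∀ (N : ℕ) (lam : Fin N → ℝ) (x : Fin N → Fin K → ℝ),
    (∀ W ⊆ T, W.card = t + 2 → ∀ j : Fin l → Fin R,
       ∑ q, lam q * ((∏ w ∈ W, ∑ s, x q s * C s w) * ∏ u, ∑ s, x q s * C s (j u)) = 0) →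
    (fun k : Fin n → Fin K => ∑ q, lam q * pw n (x q) k)
      ∈ Submodule.span ℝ {w | ∃ S : Finset (Fin R),
          (S ⊆ T ∧ S.card = K - 1) ∧ w = pw n (f S)} := by
  classical
  intro t
  induction t with
  | zero =>
    intro T hT l n hn N lam x hyp
    obtain rfl : n = l + 2 := by omega
    have hTK : T.card = K := by omega
    have hbne : ∀ c ∈ T, (∑ s, f (T.erase c) s * C s c) ≠ 0 := fun c hc =>
      hfnz (T.erase c) (by rw [Finset.card_erase_of_mem hc, hTK]) c (Finset.notMem_erase c T)
    set γ : Fin R → ℝ := fun c =>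
      (∑ q, lam q * (∑ s, x q s * C s c) ^ (l+2)) / (∑ s, f (T.erase c) s * C s c) ^ (l+2)
      with hγ
    have hvu : (fun k : Fin (l+2) → Fin K => ∑ q, lam q * pw (l+2) (x q) k)
        = fun k => ∑ c ∈ T, γ c * pw (l+2) (f (T.erase c)) k := by
      have hw : (fun k : Fin (l+2) → Fin K =>
          (∑ q, lam q * pw (l+2) (x q) k) - ∑ c ∈ T, γ c * pw (l+2) (f (T.erase c)) k) = 0 := by
        apply pairzero C hK1 hLI T (by omega)
        intro sp hsp
        have hpair : ∑ k : Fin (l+2) → Fin K,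
            ((∑ q, lam q * pw (l+2) (x q) k) - ∑ c ∈ T, γ c * pw (l+2) (f (T.erase c)) k)
              * ∏ p, C (k p) (sp p)
            = (∑ q, lam q * ∏ p, ∑ u, x q u * C u (sp p))
              - ∑ c ∈ T, γ c * ∏ p, ∑ u, f (T.erase c) u * C u (sp p) := by
          simp only [sub_mul, Finset.sum_sub_distrib]
          rw [pair_rep, pair_rep]
        rw [hpair]
        set p0 : Fin (l+2) := ⟨0, by omega⟩ with hp0
        rcases em (∀ p, sp p = sp p0) with hconst | hnc
        · set c0 := sp p0 with hc0
          have hc0T : c0 ∈ T := hsp _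
          have e1 : ∀ q : Fin N, (∏ p, ∑ u, x q u * C u (sp p))
              = (∑ u, x q u * C u c0) ^ (l+2) := by
            intro q
            rw [show (∏ p, ∑ u, x q u * C u (sp p))
                = ∏ _p : Fin (l+2), (∑ u, x q u * C u c0) from
              Finset.prod_congr rfl (fun p _ => by rw [hconst p]),
              Finset.prod_const, Finset.card_univ, Fintype.card_fin]
          have e2 : ∑ c ∈ T, γ c * ∏ p, ∑ u, f (T.erase c) u * C u (sp p)
              = γ c0 * (∑ u, f (T.erase c0) u * C u c0) ^ (l+2) := by
            rw [Finset.sum_eq_single c0]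
            · congr 1
              rw [show (∏ p, ∑ u, f (T.erase c0) u * C u (sp p))
                  = ∏ _p : Fin (l+2), (∑ u, f (T.erase c0) u * C u c0) from
                Finset.prod_congr rfl (fun p _ => by rw [hconst p]),
                Finset.prod_const, Finset.card_univ, Fintype.card_fin]
            · intro c hc hne
              have hz : (∑ u, f (T.erase c) u * C u c0) = 0 :=
                hforth (T.erase c) (by rw [Finset.card_erase_of_mem hc, hTK]) c0
                  (Finset.mem_erase.2 ⟨fun h => hne h.symm, hc0T⟩)
              rw [Finset.prod_eq_zero (Finset.mem_univ p0) hz, mul_zero]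
            · intro h; exact absurd hc0T h
          rw [e2]
          have e3 : γ c0 * (∑ u, f (T.erase c0) u * C u c0) ^ (l+2)
              = ∑ q, lam q * (∑ u, x q u * C u c0) ^ (l+2) := by
            simp only [hγ]
            exact div_mul_cancel₀ _ (pow_ne_zero _ (hbne c0 hc0T))
          rw [show (∑ q, lam q * ∏ p, ∑ u, x q u * C u (sp p))
              = ∑ q, lam q * (∑ u, x q u * C u c0) ^ (l+2) from
            Finset.sum_congr rfl (fun q _ => by rw [e1 q]), e3, sub_self]
        · push_neg at hnc
          obtain ⟨p1, hp1⟩ := hnc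
          have hone : ∑ c ∈ T, γ c * ∏ p, ∑ u, f (T.erase c) u * C u (sp p) = 0 := by
            apply Finset.sum_eq_zero
            intro c hc
            rcases em (sp p0 = c) with hec | hec
            · have hz : (∑ u, f (T.erase c) u * C u (sp p1)) = 0 :=
                hforth _ (by rw [Finset.card_erase_of_mem hc, hTK]) _
                  (Finset.mem_erase.2 ⟨by rw [← hec]; exact hp1, hsp p1⟩)
              rw [Finset.prod_eq_zero (Finset.mem_univ p1) hz, mul_zero]
            · have hz : (∑ u, f (T.erase c) u * C u (sp p0)) = 0 :=
                hforth _ (by rw [Finset.card_erase_of_mem hc, hTK]) _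
                  (Finset.mem_erase.2 ⟨hec, hsp p0⟩)
              rw [Finset.prod_eq_zero (Finset.mem_univ p0) hz, mul_zero]
          have hne : sp p0 ≠ sp p1 := fun h => hp1 h.symm
          have hpne : p1 ≠ p0 := fun h => hp1 (by rw [h])
          have hmem : p1 ∈ Finset.univ.erase p0 := Finset.mem_erase.2 ⟨hpne, Finset.mem_univ _⟩
          set E : Finset (Fin (l+2)) := (Finset.univ.erase p0).erase p1 with hEdef
          have hEcard : E.card = l := by
            rw [hEdef, Finset.card_erase_of_mem hmem,
              Finset.card_erase_of_mem (Finset.mem_univ p0), Finset.card_univ, Fintype.card_fin]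
            omega
          have huniv : (Finset.univ : Finset (Fin (l+2))) = insert p0 (insert p1 E) := by
            rw [hEdef, Finset.insert_erase hmem, Finset.insert_erase (Finset.mem_univ p0)]
          have hp0notin : p0 ∉ insert p1 E := by
            intro h
            rcases Finset.mem_insert.1 h with h | h
            · exact hpne h.symm
            · exact Finset.notMem_erase p0 _ (Finset.mem_of_mem_erase h)
          have hsplit : ∀ g : Fin R → ℝ, (∏ p, g (sp p))
              = g (sp p0) * (g (sp p1) * ∏ u : Fin l, g (sp (E.orderEmbOfFin hEcard u))) := by
            intro g
            rw [prod_orderEmb E hEcard (fun p => g (sp p))]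
            rw [show (∏ p, g (sp p)) = ∏ p ∈ insert p0 (insert p1 E), g (sp p) from by rw [← huniv]]
            rw [Finset.prod_insert hp0notin, Finset.prod_insert (Finset.notMem_erase p1 _)]
          have htwo : ∑ q, lam q * ∏ p, ∑ u, x q u * C u (sp p) = 0 := by
            have hW := hyp {sp p0, sp p1}
              (by
                intro a ha
                rcases Finset.mem_insert.1 ha with h | h
                · rw [h]; exact hsp p0
                · rw [Finset.mem_singleton.1 h]; exact hsp p1)
              (by rw [Finset.card_pair hne])
              (fun u => sp (E.orderEmbOfFin hEcard u))
            rw [← hW]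
            apply Finset.sum_congr rfl
            intro q _
            rw [Finset.prod_pair hne, hsplit (fun c => ∑ u, x q u * C u c)]
            ring
          rw [hone, htwo, sub_self]
      funext k
      have := congrFun hw k
      simp only [Pi.zero_apply] at this
      linarith
    rw [hvu]
    have hsum : (fun k : Fin (l+2) → Fin K => ∑ c ∈ T, γ c * pw (l+2) (f (T.erase c)) k)
        = ∑ c ∈ T, γ c • pw (l+2) (f (T.erase c)) := by
      funext k; rw [Finset.sum_apply]; rfl
    rw [hsum]
    apply Submodule.sum_mem
    intro c hc
    apply Submodule.smul_mem
    exact Submodule.subset_span ⟨T.erase c,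
      ⟨Finset.erase_subset _ _, by rw [Finset.card_erase_of_mem hc, hTK]⟩, rfl⟩
  | succ t ih =>
    intro T hT l n hn N lam x hyp
    obtain rfl : n = t + l + 3 := by omega
    have hTcard : T.card = K + t + 1 := by omega
    have hstep : ∀ j : Fin R, ∃ β : Finset (Fin R) → ℝ,
        (∀ S, β S ≠ 0 → S ⊆ T.erase j ∧ S.card = K - 1) ∧
        (j ∈ T → ∀ k : Fin (t+l+2) → Fin K,
          (∑ q, (lam q * ∑ s, x q s * C s j) * pw (t+l+2) (x q) k)
            = ∑ S : Finset (Fin R), β S * pw (t+l+2) (f S) k) := by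
      intro j
      rcases em (j ∈ T) with hj | hj
      · have hyp' : ∀ W ⊆ T.erase j, W.card = t + 2 → ∀ jt : Fin l → Fin R,
            ∑ q, (lam q * ∑ s, x q s * C s j) *
              ((∏ w ∈ W, ∑ s, x q s * C s w) * ∏ u, ∑ s, x q s * C s (jt u)) = 0 := by
          intro W hWsub hWcard jt
          have hjW : j ∉ W := fun h => Finset.notMem_erase j T (hWsub h)
          have hh := hyp (insert j W)
            (Finset.insert_subset hj (hWsub.trans (Finset.erase_subset _ _)))
            (by rw [Finset.card_insert_of_notMem hjW, hWcard])
            jt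
          rw [← hh]
          apply Finset.sum_congr rfl
          intro q _
          rw [Finset.prod_insert hjW]
          ring
        have hmem := ih (T.erase j)
          (by rw [Finset.card_erase_of_mem hj]; omega) l (t+l+2) (by omega) N
          (fun q => lam q * ∑ s, x q s * C s j) x hyp'
        obtain ⟨β, hs, he⟩ := span_rep (t+l+2) f
          (fun S => S ⊆ T.erase j ∧ S.card = K - 1) _ hmem
        exact ⟨β, hs, fun _ k => he k⟩
      · exact ⟨0, fun S h => absurd rfl h, fun h => absurd h hj⟩
    choose β hβsupp hβeq using hstep
    have claimB : ∀ i ∈ T, ∀ j ∈ T, ∀ S₀ : Finset (Fin R), S₀ ⊆ T → S₀.card = K - 1 →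
        i ∉ S₀ → j ∉ S₀ →
        β j S₀ * (∑ s, f S₀ s * C s i) = β i S₀ * (∑ s, f S₀ s * C s j) := by
      intro i hi j hj S₀ hS₀T hS₀card hiS₀ hjS₀
      rcases em (i = j) with rfl | hij
      · rfl
      have key : ∀ (a b : Fin R), a ∈ T → ∀ k : Fin (t+l+1) → Fin K,
          ∑ S : Finset (Fin R), (β a S * (∑ s, f S s * C s b)) * pw (t+l+1) (f S) k
            = ∑ q, (lam q * ((∑ s, x q s * C s a) * (∑ s, x q s * C s b)))
                * pw (t+l+1) (x q) k := by
        intro a b ha k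
        calc ∑ S : Finset (Fin R), (β a S * (∑ s, f S s * C s b)) * pw (t+l+1) (f S) k
            = ∑ u, C u b * (∑ S : Finset (Fin R), β a S * pw (t+l+2) (f S) (Fin.cons u k)) :=
              (ctr_rep C Finset.univ (t+l+1) b (β a) f k).symm
          _ = ∑ u, C u b * (∑ q, (lam q * ∑ s, x q s * C s a)
                * pw (t+l+2) (x q) (Fin.cons u k)) := by
              apply Finset.sum_congr rfl
              intro u _
              rw [← hβeq a ha (Fin.cons u k)]
          _ = ∑ q, ((lam q * ∑ s, x q s * C s a) * (∑ s, x q s * C s b))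
                * pw (t+l+1) (x q) k :=
              ctr_rep C Finset.univ (t+l+1) b (fun q => lam q * ∑ s, x q s * C s a) x k
          _ = ∑ q, (lam q * ((∑ s, x q s * C s a) * (∑ s, x q s * C s b)))
                * pw (t+l+1) (x q) k := by
              apply Finset.sum_congr rfl; intro q _; ring
      have hμ0 : ∀ k : Fin (t+l+1) → Fin K,
          ∑ S : Finset (Fin R),
            (β j S * (∑ s, f S s * C s i) - β i S * (∑ s, f S s * C s j))
              * pw (t+l+1) (f S) k = 0 := by
        intro k
        simp only [sub_mul, Finset.sum_sub_distrib]
        rw [key j i hj k, key i j hi k, sub_eq_zero]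
        apply Finset.sum_congr rfl; intro q _; ring
      have hsubT : insert i (insert j S₀) ⊆ T := by
        intro a ha
        rcases Finset.mem_insert.1 ha with rfl | ha
        · exact hi
        rcases Finset.mem_insert.1 ha with rfl | ha
        · exact hj
        · exact hS₀T ha
      have hJcard : (T \ insert i (insert j S₀)).card = t := by
        rw [Finset.card_sdiff_of_subset hsubT,
          Finset.card_insert_of_notMem (by
            intro h
            rcases Finset.mem_insert.1 h with h | h
            · exact hij h
            · exact hiS₀ h),
          Finset.card_insert_of_notMem hjS₀, hS₀card]
        omega
      have hconc := indep C hK1 f hf0 hforth hfnz (T \ insert i (insert j S₀)) (t+l+1)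
        (fun S => β j S * (∑ s, f S s * C s i) - β i S * (∑ s, f S s * C s j)) S₀
        (by omega) hS₀card
        (by
          intro S hS
          rcases em (β j S = 0) with h1 | h1
          · rcases em (β i S = 0) with h2 | h2
            · exact absurd (by simp [h1, h2]) hS
            · exact (hβsupp i S h2).2
          · exact (hβsupp j S h1).2)
        (by
          intro S hS hSne
          have hfacts : S ⊆ T ∧ S.card = K - 1 ∧ i ∉ S ∧ j ∉ S := by
            rcases em (β j S * (∑ s, f S s * C s i) = 0) with h1 | h1
            · have h2 : β i S * (∑ s, f S s * C s j) ≠ 0 := by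
                intro h0; apply hS; simp only [h1, h0, sub_zero]
              have hb := hβsupp i S (left_ne_zero_of_mul h2)
              have hdfj := right_ne_zero_of_mul h2
              refine ⟨hb.1.trans (Finset.erase_subset _ _), hb.2, ?_, ?_⟩
              · intro h0; exact Finset.notMem_erase i T (hb.1 h0)
              · intro h0; exact hdfj (hforth S hb.2 j h0)
            · have hb := hβsupp j S (left_ne_zero_of_mul h1)
              have hdfi := right_ne_zero_of_mul h1
              refine ⟨hb.1.trans (Finset.erase_subset _ _), hb.2, ?_, ?_⟩
              · intro h0; exact hdfi (hforth S hb.2 i h0)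
              · intro h0; exact Finset.notMem_erase j T (hb.1 h0)
          obtain ⟨hST, hScard, hiS, hjS⟩ := hfacts
          have hnsub : ¬ S ⊆ S₀ := by
            intro hsub
            exact hSne (Finset.eq_of_subset_of_card_le hsub (by rw [hS₀card, hScard]))
          obtain ⟨sE, hsES, hsENS₀⟩ := Finset.not_subset.1 hnsub
          refine ⟨sE, Finset.mem_inter.2 ⟨hsES, ?_⟩⟩
          rw [Finset.mem_sdiff]
          refine ⟨hST hsES, ?_⟩
          intro h
          rcases Finset.mem_insert.1 h with rfl | h
          · exact hiS hsES
          rcases Finset.mem_insert.1 h with rfl | h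
          · exact hjS hsES
          · exact hsENS₀ h)
        (by
          rw [Finset.eq_empty_iff_forall_notMem]
          intro a ha
          rw [Finset.mem_inter, Finset.mem_sdiff] at ha
          exact ha.2.2 (Finset.mem_insert_of_mem (Finset.mem_insert_of_mem ha.1)))
        hμ0
      exact sub_eq_zero.mp hconc
    have hjex : ∀ S : Finset (Fin R), S ⊆ T ∧ S.card = K - 1 → ∃ j0, j0 ∈ T ∧ j0 ∉ S := by
      intro S hS
      have hnsub : ¬ T ⊆ S := by
        intro hsub
        have := Finset.card_le_card hsub
        have := hS.2
        omega
      obtain ⟨j0, h1, h2⟩ := Finset.not_subset.1 hnsub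
      exact ⟨j0, h1, h2⟩
    set γ : Finset (Fin R) → ℝ := fun S =>
      if h : S ⊆ T ∧ S.card = K - 1 then
        β (hjex S h).choose S / (∑ s, f S s * C s (hjex S h).choose) else 0 with hγ
    have claimA : ∀ j ∈ T, ∀ S : Finset (Fin R),
        γ S * (∑ s, f S s * C s j) = β j S := by
      intro j hj S
      rcases em (S ⊆ T ∧ S.card = K - 1) with h | h
      · obtain ⟨hj0T, hj0S⟩ := (hjex S h).choose_spec
        have hγS : γ S = β (hjex S h).choose S
            / (∑ s, f S s * C s (hjex S h).choose) := by
          rw [hγ]; simp only [dif_pos h]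
        rcases em (j ∈ S) with hjS | hjS
        · rw [hforth S h.2 j hjS, mul_zero]
          by_contra hne
          have hb : β j S ≠ 0 := fun h0 => hne h0.symm
          exact Finset.notMem_erase j T ((hβsupp j S hb).1 hjS)
        · have hdfj0 : (∑ s, f S s * C s (hjex S h).choose) ≠ 0 := hfnz S h.2 _ hj0S
          rcases em (j = (hjex S h).choose) with rfl | hjj0
          · rw [hγS, div_mul_cancel₀ _ hdfj0]
          · have hB := claimB (hjex S h).choose hj0T j hj S h.1 h.2 hj0S hjS
            rw [hγS]
            field_simp
            linarith [hB]
      · have hγ0 : γ S = 0 := by rw [hγ]; simp only [dif_neg h]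
        rw [hγ0, zero_mul]
        by_contra hne
        have hb : β j S ≠ 0 := fun h0 => hne h0.symm
        have hbb := hβsupp j S hb
        exact h ⟨hbb.1.trans (Finset.erase_subset _ _), hbb.2⟩
    have hγsupp : ∀ S, γ S ≠ 0 → S ⊆ T ∧ S.card = K - 1 := by
      intro S hS
      by_contra h
      rw [hγ] at hS; simp only [dif_neg h] at hS; exact hS rfl
    have hvu : (fun k : Fin (t+l+3) → Fin K => ∑ q, lam q * pw (t+l+3) (x q) k)
        = fun k => ∑ S : Finset (Fin R), γ S * pw (t+l+3) (f S) k := by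
      funext k
      have hkey : ∀ (u0 : Fin K) (k' : Fin (t+l+2) → Fin K),
          (∑ q, lam q * pw (t+l+3) (x q) (Fin.cons u0 k'))
            = ∑ S : Finset (Fin R), γ S * pw (t+l+3) (f S) (Fin.cons u0 k') := by
        intro u0 k'
        have hφ : (fun u : Fin K => (∑ q, lam q * pw (t+l+3) (x q) (Fin.cons u k'))
            - ∑ S : Finset (Fin R), γ S * pw (t+l+3) (f S) (Fin.cons u k')) = 0 := by
          apply eq_zero_of_dt_cols C hK1 hLI T (by omega)
          intro j hj
          have c1 : ∑ u, C u j * (∑ q, lam q * pw (t+l+3) (x q) (Fin.cons u k'))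
              = ∑ q, (lam q * (∑ s, x q s * C s j)) * pw (t+l+2) (x q) k' :=
            ctr_rep C Finset.univ (t+l+2) j lam x k'
          have c2 : ∑ u, C u j * (∑ S : Finset (Fin R), γ S * pw (t+l+3) (f S) (Fin.cons u k'))
              = ∑ S : Finset (Fin R), (γ S * (∑ s, f S s * C s j)) * pw (t+l+2) (f S) k' :=
            ctr_rep C Finset.univ (t+l+2) j γ f k'
          simp only [mul_sub, Finset.sum_sub_distrib]
          rw [c1, c2, sub_eq_zero, hβeq j hj k']
          apply Finset.sum_congr rfl
          intro S _
          rw [claimA j hj S]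
        have := congrFun hφ u0
        simp only [Pi.zero_apply] at this
        linarith
      have hcons := Fin.cons_self_tail (α := fun _ => Fin K) k
      rw [← hcons]
      exact hkey _ _
    rw [hvu]
    exact span_of_rep (t+l+3) f (fun S => S ⊆ T ∧ S.card = K - 1) γ hγsupp
lemma transpose_mulVec_apply {α β : Type*} [Fintype α] (M : Matrix α β ℝ) (w : α → ℝ) (b : β) :
    (Mᵀ *ᵥ w) b = ∑ a, M a b * w a := by
  rw [Matrix.mulVec, dotProduct]
  apply Finset.sum_congr rfl
  intro a _
  rw [Matrix.transpose_apply]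

lemma Sml_pw (m l : ℕ) (x : Fin K → ℝ) (rr : TupleIdx m l R) :
    ∑ k : Fin (m+l) → Fin K, Sml m l C k rr * pw (m+l) x k
      = ∏ p, (∑ s, x s * C s (rr.1 p)) := by
  have h2 : ∀ σ : Equiv.Perm (Fin (m+l)),
      ∑ k : Fin (m+l) → Fin K, pw (m+l) x k * ∏ p, C (k p) (rr.1 (σ p))
        = ∏ p, (∑ s, x s * C s (rr.1 p)) := by
    intro σ
    rw [sum_pw_prod (m+l) x (fun p u => C u (rr.1 (σ p)))]
    exact Equiv.prod_comp σ (fun p => ∑ s, x s * C s (rr.1 p))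
  calc ∑ k : Fin (m+l) → Fin K, Sml m l C k rr * pw (m+l) x k
      = ∑ k : Fin (m+l) → Fin K, (1 / ((m+l).factorial : ℝ))
          * ∑ σ : Equiv.Perm (Fin (m+l)), pw (m+l) x k * ∏ p, C (k p) (rr.1 (σ p)) := by
        apply Finset.sum_congr rfl
        intro k _
        simp only [Sml]
        rw [mul_assoc, Finset.sum_mul]
        congr 1
        apply Finset.sum_congr rfl
        intro σ _
        ring
    _ = (1 / ((m+l).factorial : ℝ)) * ∑ σ : Equiv.Perm (Fin (m+l)),
          ∑ k : Fin (m+l) → Fin K, pw (m+l) x k * ∏ p, C (k p) (rr.1 (σ p)) := by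
        rw [← Finset.mul_sum]
        congr 1
        exact Finset.sum_comm
    _ = (1 / ((m+l).factorial : ℝ)) * ∑ _σ : Equiv.Perm (Fin (m+l)),
          ∏ p, (∑ s, x s * C s (rr.1 p)) := by
        congr 1
        exact Finset.sum_congr rfl (fun σ _ => h2 σ)
    _ = ∏ p, (∑ s, x s * C s (rr.1 p)) := by
        rw [Finset.sum_const, Finset.card_univ, Fintype.card_perm, Fintype.card_fin,
          nsmul_eq_mul, ← mul_assoc, one_div,
          inv_mul_cancel₀ (by exact_mod_cast (Nat.factorial_ne_zero (m+l)) :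
            ((m+l).factorial : ℝ) ≠ 0), one_mul]

end Aux

/-- `ker S_{m+l}(C)ᵀ ∩ S^{m+l}(ℝ^{K^{m+l}}) = range F^{(m+l)}`
for `F` satisfying (P1)–(P2). -/
theorem kernel_Sml_eq_range_krPow {K R : ℕ} (C : Matrix (Fin K) (Fin R) ℝ)
    (hKR : K ≤ R) (hkC : kRank C = K)
    (m : ℕ) (hm : m = R - K + 2) (l : ℕ)
    (F : Matrix (Fin K) (Fin (Nat.choose R (K - 1))) ℝ)
    (hF : SatisfiesP1P2 C F) :
    LinearMap.ker ((Sml m l C)ᵀ).mulVecLin ⊓ symSpan K (m + l)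
      = LinearMap.range (krPow F (m + l)).mulVecLin := by
  classical
  rcases Nat.eq_zero_or_pos K with hK0 | hK1
  · subst hK0
    have hml : 0 < m + l := by omega
    have hie : IsEmpty (Fin (m + l) → Fin 0) := ⟨fun h => (h ⟨0, hml⟩).elim0⟩
    have hsub : ∀ v : (Fin (m + l) → Fin 0) → ℝ, v = 0 := by
      intro v; funext kk; exact (hie.false kk).elim
    refine le_antisymm (fun v _ => ?_) (fun v _ => ?_)
    · rw [hsub v]; exact Submodule.zero_mem _
    · rw [hsub v]; exact Submodule.zero_mem _
  have hLI : LIK C := by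
    have hne : Set.Nonempty {k : ℕ | k ≤ R ∧ ∀ s : Finset (Fin R), s.card = k →
        LinearIndependent ℝ (fun r : {x // x ∈ s} => Cᵀ (r : Fin R))} := by
      refine ⟨0, Nat.zero_le R, fun s hs => ?_⟩
      have hs' : s = ∅ := Finset.card_eq_zero.1 hs
      subst hs'
      have he : IsEmpty {x : Fin R // x ∈ (∅ : Finset (Fin R))} :=
        ⟨fun x => absurd x.2 (Finset.notMem_empty x.1)⟩
      exact linearIndependent_empty_type
    have hbdd : BddAbove {k : ℕ | k ≤ R ∧ ∀ s : Finset (Fin R), s.card = k →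
        LinearIndependent ℝ (fun r : {x // x ∈ s} => Cᵀ (r : Fin R))} :=
      ⟨R, fun k hk => hk.1⟩
    have hmem := Nat.sSup_mem hne hbdd
    have hkk : kRank C ∈ {k : ℕ | k ≤ R ∧ ∀ s : Finset (Fin R), s.card = k →
        LinearIndependent ℝ (fun r : {x // x ∈ s} => Cᵀ (r : Fin R))} := hmem
    rw [hkC] at hkk
    exact fun s hs => hkk.2 s hs
  have hex : ∀ S : Finset (Fin R), S.card = K - 1 →
      ∃ g : Fin K → ℝ, g ≠ 0 ∧ ∀ r ∈ S, (∑ s, g s * C s r) = 0 := by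
    intro S hS
    let φ : (Fin K → ℝ) →ₗ[ℝ] ({x // x ∈ S} → ℝ) :=
      { toFun := fun g r => ∑ s, g s * C s (r : Fin R)
        map_add' := by
          intro g h; funext r
          simp [add_mul, Finset.sum_add_distrib]
        map_smul' := by
          intro c g; funext r
          simp [Finset.mul_sum, mul_assoc] }
    have hker : LinearMap.ker φ ≠ ⊥ := by
      intro hbot
      have hinj : Function.Injective φ := LinearMap.ker_eq_bot.1 hbot
      have hle := LinearMap.finrank_le_finrank_of_injective hinj
      rw [Module.finrank_pi, Module.finrank_pi, Fintype.card_fin, Fintype.card_coe, hS] at hle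
      omega
    obtain ⟨g, hgker, hgne⟩ := Submodule.exists_mem_ne_zero_of_ne_bot hker
    refine ⟨g, hgne, fun r hr => ?_⟩
    have hg0 := LinearMap.mem_ker.1 hgker
    exact congrFun hg0 ⟨r, hr⟩
  set f : Finset (Fin R) → Fin K → ℝ := fun S =>
    if h : S.card = K - 1 then (hex S h).choose else 0 with hfdef
  have hf0 : ∀ S : Finset (Fin R), S.card = K - 1 → f S ≠ 0 := by
    intro S hS
    simp only [hfdef, dif_pos hS]
    exact (hex S hS).choose_spec.1
  have hforth : ∀ S : Finset (Fin R), S.card = K - 1 → ∀ r ∈ S, (∑ s, f S s * C s r) = 0 := by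
    intro S hS r hr
    simp only [hfdef, dif_pos hS]
    exact (hex S hS).choose_spec.2 r hr
  have hfnz : ∀ S : Finset (Fin R), S.card = K - 1 → ∀ j, j ∉ S → (∑ s, f S s * C s j) ≠ 0 := by
    intro S hS j hj h0
    apply hf0 S hS
    apply eq_zero_of_dt_cols C hK1 hLI (insert j S)
      (by rw [Finset.card_insert_of_notMem hj, hS]; omega)
    intro j' hj'
    have hz : ∑ s, f S s * C s j' = 0 := by
      rcases Finset.mem_insert.1 hj' with rfl | hj''
      · exact h0
      · exact hforth S hS j' hj''
    rw [← hz]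
    apply Finset.sum_congr rfl
    intro s _
    ring
  refine le_antisymm (fun v hv => ?_) (fun v hv => ?_)
  · obtain ⟨hker, hsym⟩ := Submodule.mem_inf.1 hv
    obtain ⟨N, lam, xs, hrep⟩ : ∃ (N : ℕ) (lam : Fin N → ℝ) (xs : Fin N → Fin K → ℝ),
        ∀ k, v k = ∑ q, lam q * pw (m+l) (xs q) k := by
      clear hker hv
      induction hsym using Submodule.span_induction with
      | mem w hw =>
          obtain ⟨xx, rfl⟩ := hw
          exact ⟨1, fun _ => 1, fun _ => xx, fun k => by simp [pw]⟩
      | zero => exact ⟨0, fun q => 0, fun q => 0, fun k => by simp⟩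
      | add a b _ _ iha ihb =>
          obtain ⟨N₁, l₁, x₁, h₁⟩ := iha
          obtain ⟨N₂, l₂, x₂, h₂⟩ := ihb
          refine ⟨N₁ + N₂, Fin.append l₁ l₂, Fin.append x₁ x₂, fun k => ?_⟩
          rw [Pi.add_apply, h₁ k, h₂ k, Fin.sum_univ_add]
          congr 1
          · apply Finset.sum_congr rfl
            intro q _
            rw [Fin.append_left, Fin.append_left]
          · apply Finset.sum_congr rfl
            intro q _
            rw [Fin.append_right, Fin.append_right]
      | smul c a _ iha =>
          obtain ⟨N₁, l₁, x₁, h₁⟩ := iha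
          refine ⟨N₁, fun q => c * l₁ q, x₁, fun k => ?_⟩
          rw [Pi.smul_apply, smul_eq_mul, h₁ k, Finset.mul_sum]
          exact Finset.sum_congr rfl (fun q _ => by ring)
    have hv_eq : v = fun k => ∑ q, lam q * pw (m+l) (xs q) k := funext hrep
    have hker' : ((Sml m l C)ᵀ) *ᵥ v = 0 := by
      have h0 := LinearMap.mem_ker.1 hker
      rwa [Matrix.mulVecLin_apply] at h0
    have hscal : ∀ rr : TupleIdx m l R,
        ∑ q, lam q * ∏ p, (∑ s, xs q s * C s (rr.1 p)) = 0 := by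
      intro rr
      have h1 : ((Sml m l C)ᵀ *ᵥ v) rr = 0 := by rw [hker']; rfl
      rw [transpose_mulVec_apply] at h1
      rw [← h1]
      calc ∑ q, lam q * ∏ p, (∑ s, xs q s * C s (rr.1 p))
          = ∑ q, lam q * ∑ k : Fin (m+l) → Fin K, Sml m l C k rr * pw (m+l) (xs q) k := by
            apply Finset.sum_congr rfl
            intro q _
            rw [Sml_pw]
        _ = ∑ k : Fin (m+l) → Fin K, Sml m l C k rr * v k := by
            simp only [Finset.mul_sum]
            rw [Finset.sum_comm]
            apply Finset.sum_congr rfl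
            intro k _
            rw [hrep k, Finset.mul_sum]
            apply Finset.sum_congr rfl
            intro q _
            ring
    have hscal2 : ∀ sp : Fin (m+l) → Fin R, m ≤ (Finset.image sp Finset.univ).card →
        ∑ q, lam q * ∏ p, (∑ s, xs q s * C s (sp p)) = 0 := by
      intro sp hcard
      have hmono : Monotone (sp ∘ Tuple.sort sp) := Tuple.monotone_sort sp
      have himg : Finset.image (sp ∘ Tuple.sort sp) Finset.univ
          = Finset.image sp Finset.univ := by
        ext aa
        simp only [Finset.mem_image, Function.comp_apply]
        constructor
        · rintro ⟨p, _, h⟩; exact ⟨Tuple.sort sp p, Finset.mem_univ _, h⟩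
        · rintro ⟨p, _, h⟩
          exact ⟨(Tuple.sort sp).symm p, Finset.mem_univ _, by
            rw [Equiv.apply_symm_apply]; exact h⟩
      have htup : IsTupleIdx m (sp ∘ Tuple.sort sp) :=
        ⟨fun a b hab => hmono hab, by rw [himg]; exact hcard⟩
      have hz := hscal ⟨sp ∘ Tuple.sort sp, htup⟩
      rw [← hz]
      apply Finset.sum_congr rfl
      intro q _
      congr 1
      exact (Equiv.prod_comp (Tuple.sort sp) (fun p => ∑ s, xs q s * C s (sp p))).symm
    have hcorehyp : ∀ W ⊆ (Finset.univ : Finset (Fin R)), W.card = (R - K) + 2 →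
        ∀ jt : Fin l → Fin R,
        ∑ q, lam q * ((∏ w ∈ W, ∑ s, xs q s * C s w) * ∏ u, ∑ s, xs q s * C s (jt u)) = 0 := by
      intro W _ hWcard jt
      have hWm : W.card = m := by omega
      have himg : m ≤ (Finset.image (Fin.append (fun p : Fin m => W.orderEmbOfFin hWm p) jt)
          Finset.univ).card := by
        have hsub : W ⊆ Finset.image (Fin.append (fun p : Fin m => W.orderEmbOfFin hWm p) jt)
            Finset.univ := by
          intro a ha
          have hmem : a ∈ Set.range (W.orderEmbOfFin hWm) := by
            rw [Finset.range_orderEmbOfFin]; exact ha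
          obtain ⟨p, hp⟩ := hmem
          refine Finset.mem_image.2 ⟨Fin.castAdd l p, Finset.mem_univ _, ?_⟩
          rw [Fin.append_left]; exact hp
        calc m = W.card := hWm.symm
          _ ≤ _ := Finset.card_le_card hsub
      have hz := hscal2 (Fin.append (fun p : Fin m => W.orderEmbOfFin hWm p) jt) himg
      calc ∑ q, lam q * ((∏ w ∈ W, ∑ s, xs q s * C s w) * ∏ u, ∑ s, xs q s * C s (jt u))
          = ∑ q, lam q * ∏ p, (∑ s, xs q s * C s
              ((Fin.append (fun p : Fin m => W.orderEmbOfFin hWm p) jt) p)) := by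
            apply Finset.sum_congr rfl
            intro q _
            congr 1
            rw [Fin.prod_univ_add]
            congr 1
            · rw [← prod_orderEmb W hWm (fun c => ∑ s, xs q s * C s c)]
              apply Finset.prod_congr rfl
              intro p _
              rw [Fin.append_left]
            · apply Finset.prod_congr rfl
              intro u _
              rw [Fin.append_right]
        _ = 0 := hz
    have hcore := core C hK1 hLI f hf0 hforth hfnz (R - K) Finset.univ
      (by rw [Finset.card_univ, Fintype.card_fin]; omega) l (m + l) (by omega)
      N lam xs hcorehyp
    have hrange : ∀ S : Finset (Fin R), S.card = K - 1 →
        pw (m+l) (f S) ∈ LinearMap.range (krPow F (m+l)).mulVecLin := by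
      intro S hS
      have hfilter : Finset.univ.filter (fun r : Fin R => ∑ s, f S s * C s r = 0) = S := by
        ext r
        simp only [Finset.mem_filter, Finset.mem_univ, true_and]
        constructor
        · intro h0
          by_contra hr
          exact hfnz S hS r hr h0
        · intro hr
          exact hforth S hS r hr
      have hcardeq : Nat.card {r : Fin R // ∑ s, f S s * C s r = 0} = K - 1 := by
        rw [Nat.card_eq_fintype_card, Fintype.card_subtype, hfilter, hS]
      obtain ⟨c, τ, hτ⟩ := hF.2 (f S) hcardeq
      have hτne : τ ≠ 0 := by
        intro h0
        rw [h0, zero_smul] at hτ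
        exact hf0 S hS hτ
      refine ⟨τ ^ (m+l) • (Pi.single c 1 : Fin (Nat.choose R (K - 1)) → ℝ), ?_⟩
      rw [LinearMap.map_smul]
      funext k
      have hsingle : (krPow F (m+l)).mulVecLin (Pi.single c 1) k = ∏ p, F (k p) c := by
        rw [Matrix.mulVecLin_apply, Matrix.mulVec, dotProduct]
        rw [Finset.sum_eq_single c]
        · simp [krPow]
        · intro b _ hb; simp [Pi.single_apply, hb]
        · intro h; exact absurd (Finset.mem_univ c) h
      rw [Pi.smul_apply, hsingle, smul_eq_mul]
      have hpwS : pw (m+l) (f S) k = ∏ p, (τ * F (k p) c) := by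
        simp only [pw]
        apply Finset.prod_congr rfl
        intro p _
        rw [hτ]
        simp
      rw [hpwS, Finset.prod_mul_distrib, Finset.prod_const, Finset.card_univ, Fintype.card_fin]
    have hspanle : Submodule.span ℝ {w | ∃ S : Finset (Fin R),
        (S ⊆ Finset.univ ∧ S.card = K - 1) ∧ w = pw (m+l) (f S)}
          ≤ LinearMap.range (krPow F (m+l)).mulVecLin := by
      rw [Submodule.span_le]
      rintro w ⟨S, ⟨_, hcard⟩, rfl⟩
      exact hrange S hcard
    rw [hv_eq]
    exact hspanle hcore
  · obtain ⟨a, rfl⟩ := hv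
    have hva : ∀ k, (krPow F (m+l)).mulVecLin a k
        = ∑ c, a c * pw (m+l) (fun s => F s c) k := by
      intro k
      rw [Matrix.mulVecLin_apply, Matrix.mulVec, dotProduct]
      apply Finset.sum_congr rfl
      intro c _
      exact mul_comm _ _
    rw [Submodule.mem_inf]
    constructor
    · rw [LinearMap.mem_ker]
      funext rr
      have h1 : (((Sml m l C)ᵀ).mulVecLin ((krPow F (m+l)).mulVecLin a)) rr
          = ∑ k : Fin (m+l) → Fin K, Sml m l C k rr * ((krPow F (m+l)).mulVecLin a) k := by
        rw [Matrix.mulVecLin_apply, transpose_mulVec_apply]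
      rw [h1]
      have hzero : ∀ c, (∏ p, ∑ s, F s c * C s (rr.1 p)) = 0 := by
        intro c
        have hcardZ : (Finset.univ.filter (fun r : Fin R => ∑ s, F s c * C s r = 0)).card
            = K - 1 := by
          have h := hF.1 c
          rwa [Nat.card_eq_fintype_card, Fintype.card_subtype] at h
        by_contra hne
        have hall : ∀ p, (∑ s, F s c * C s (rr.1 p)) ≠ 0 :=
          fun p h0 => hne (Finset.prod_eq_zero (Finset.mem_univ p) h0)
        have hsub : Finset.image rr.1 Finset.univ
            ⊆ Finset.univ.filter (fun r : Fin R => ¬ (∑ s, F s c * C s r = 0)) := by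
          intro aa ha
          obtain ⟨p, _, rfl⟩ := Finset.mem_image.1 ha
          exact Finset.mem_filter.2 ⟨Finset.mem_univ _, hall p⟩
        have hcards := Finset.card_le_card hsub
        have hsplit := Finset.card_filter_add_card_filter_not
          (s := (Finset.univ : Finset (Fin R))) (p := fun r : Fin R => ∑ s, F s c * C s r = 0)
        rw [Finset.card_univ, Fintype.card_fin] at hsplit
        have himg := rr.2.2
        omega
      calc ∑ k : Fin (m+l) → Fin K, Sml m l C k rr * ((krPow F (m+l)).mulVecLin a) k
          = ∑ c, a c * ∑ k : Fin (m+l) → Fin K,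
              Sml m l C k rr * pw (m+l) (fun s => F s c) k := by
            have hper : ∀ k, Sml m l C k rr * ((krPow F (m+l)).mulVecLin a) k
                = ∑ c, a c * (Sml m l C k rr * pw (m+l) (fun s => F s c) k) := by
              intro k
              rw [hva k, Finset.mul_sum]
              apply Finset.sum_congr rfl
              intro c _
              ring
            rw [Finset.sum_congr rfl (fun k _ => hper k), Finset.sum_comm]
            apply Finset.sum_congr rfl
            intro c _
            rw [Finset.mul_sum]
        _ = ∑ c, a c * ∏ p, (∑ s, F s c * C s (rr.1 p)) := by
            apply Finset.sum_congr rfl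
            intro c _
            congr 1
            exact Sml_pw C m l (fun s => F s c) rr
        _ = 0 := Finset.sum_eq_zero (fun c _ => by rw [hzero c, mul_zero])
    · have hfun : (krPow F (m+l)).mulVecLin a
          = ∑ c, a c • pw (m+l) (fun s => F s c) := by
        funext k
        rw [hva k, Finset.sum_apply]
        rfl
      rw [hfun]
      apply Submodule.sum_mem
      intro c _
      apply Submodule.smul_mem
      exact Submodule.subset_span ⟨fun s => F s c, rfl⟩

end CPD
end

section
/- Let C ∈ ℝ^{K×R} with k_C = K ≤ R, set m = R − K + 2, and let l ≥ 0. Then rank( S_{m+l}(C) ) ≥ C(R+l+1, m+l) − C(R, m−1). -/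
/-!
A tensor `v` indexed by `(Fin n → Fin K)` is sent to the polynomial `∑ₖ vₖ x_{k₁} ⋯ x_{kₙ}` on
`ℝ^K`. The column of `S_{m+l}(C)` indexed by `r` becomes the product `ℓ_{r₁} ⋯ ℓ_{r_{m+l}}` of the
linear forms `ℓ_r = ⟨c_r, ·⟩`, so `rank S_{m+l}(C)` bounds the dimension of the span `G` of the
products of `m + l` forms with at least `m` distinct indices.

Any `K` columns of `C` form a basis, so a repeated factor `ℓ_r` may be rewritten through any `K`
of the forms. Rewriting it through forms whose indices do not occur yet raises the number of
distinct indices. With at most `m - 2` distinct indices there are at least `K` unused ones; with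
exactly `m - 1` there are only `K - 1`, and adding one pivot index of the support either raises
the count or moves the repetition onto the pivot. Hence every product of `m + l` forms lies in
`G` plus the span of one product per `(m - 1)`-subset of indices, while these products span all
`C(K + m + l - 1, m + l) = C(R + l + 1, m + l)` monomials of degree `m + l`.
-/

open scoped BigOperators
open Matrix

open Submodule MvPolynomial

section FormProducts

variable {𝕜 A : Type*} [Field 𝕜] [CommRing A] [Algebra 𝕜 A]

lemma mul_mem_of_mem_span {s : Set A} {x y : A} {M : Submodule 𝕜 A} (hx : x ∈ span 𝕜 s)
    (h : ∀ z ∈ s, z * y ∈ M) : x * y ∈ M :=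
  span_le (p := M.comap (LinearMap.mulRight 𝕜 y)).2 h hx

variable {ι : Type*} (ℓ : ι → A)

def formProd (s : Multiset ι) : A := (s.map ℓ).prod

@[simp]
lemma formProd_zero : formProd ℓ 0 = 1 := by simp [formProd]

@[simp]
lemma formProd_cons (a : ι) (s : Multiset ι) : formProd ℓ (a ::ₘ s) = ℓ a * formProd ℓ s := by
  simp [formProd]

lemma formProd_mem_span_formProd {σ : Type*} {f : σ → A} (hf : ∀ j, f j ∈ span 𝕜 (Set.range ℓ))
    (s : Multiset σ) :
    formProd f s ∈ span 𝕜 (formProd ℓ '' {t | Multiset.card t = Multiset.card s}) := by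
  induction s using Multiset.induction_on with
  | empty => exact subset_span ⟨0, by simp, by simp⟩
  | cons a s ih =>
    rw [formProd_cons, Multiset.card_cons]
    have hmul := mul_mem_mul (hf a) ih
    rw [span_mul_span] at hmul
    refine span_mono ?_ hmul
    rintro _ ⟨_, ⟨i, rfl⟩, _, ⟨t, ht, rfl⟩, rfl⟩
    exact ⟨i ::ₘ t, by simpa using ht, formProd_cons ℓ i t⟩

variable (𝕜) in
def SpannedByAny (K : ℕ) : Prop :=
  ∀ T : Finset ι, T.card = K → ∀ r, ℓ r ∈ span 𝕜 (ℓ '' T)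

/-- Modulo `spanDistinctProds`, every product of `n` forms with index set exactly `S`, where
`#S = m - 1`, is a multiple of this one, which puts all repeated factors on one chosen index. -/
noncomputable def pivotProd (n : ℕ) (S : Finset ι) : A :=
  if h : S.Nonempty then formProd ℓ (S.val + Multiset.replicate (n - S.card) h.choose) else 0

variable (𝕜) in
def spanPivotProds (m n : ℕ) : Submodule 𝕜 A :=
  span 𝕜 (Set.range fun S : {S : Finset ι // S.card = m - 1} => pivotProd ℓ n S)

instance [Fintype ι] (m n : ℕ) : FiniteDimensional 𝕜 (spanPivotProds 𝕜 ℓ m n) :=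
  FiniteDimensional.span_of_finite 𝕜 (Set.finite_range _)

lemma finrank_spanPivotProds_le [Fintype ι] (m n : ℕ) :
    Module.finrank 𝕜 (spanPivotProds 𝕜 ℓ m n) ≤ (Fintype.card ι).choose (m - 1) := by
  rw [spanPivotProds, ← Fintype.card_finset_len]
  exact finrank_range_le_card _

variable [DecidableEq ι]

variable (𝕜) in
def spanDistinctProds (m n : ℕ) : Submodule 𝕜 A :=
  span 𝕜 (formProd ℓ '' {s | Multiset.card s = n ∧ m ≤ s.toFinset.card})

variable {ℓ}

lemma formProd_mem_spanDistinctProds {m n : ℕ} {S : Finset ι} {e : Multiset ι}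
    (hm : m ≤ S.card) (hn : Multiset.card (S.val + e) = n) :
    formProd ℓ (S.val + e) ∈ spanDistinctProds 𝕜 ℓ m n := by
  refine subset_span ⟨_, ⟨hn, hm.trans (Finset.card_le_card fun i hi => ?_)⟩, rfl⟩
  simp [hi]

variable [Fintype ι] {K m n : ℕ}

lemma formProd_add_mem_of_card_add_one_eq
    (hspan : SpannedByAny 𝕜 ℓ K)
    (hK : K ≤ Fintype.card ι) (hm : m = Fintype.card ι - K + 2)
    {S : Finset ι} (hS : S.card + 1 = m) {e : Multiset ι} (he : S.card + Multiset.card e = n) :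
    formProd ℓ (S.val + e) ∈ spanDistinctProds 𝕜 ℓ m n ⊔ spanPivotProds 𝕜 ℓ m n := by
  have hne : S.Nonempty := Finset.card_pos.1 (by omega)
  set piv := hne.choose
  have hT : (insert piv Sᶜ).card = K := by
    rw [Finset.card_insert_of_notMem (by simpa using hne.choose_spec), Finset.card_compl]
    have := S.card_le_univ
    omega
  suffices key : ∀ (e : Multiset ι) (j : ℕ), S.card + Multiset.card e + j = n →
      formProd ℓ (S.val + Multiset.replicate j piv + e) ∈
        spanDistinctProds 𝕜 ℓ m n ⊔ spanPivotProds 𝕜 ℓ m n by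
    simpa using key e 0 (by omega)
  intro e
  induction e using Multiset.induction_on with
  | empty =>
    intro j hj
    rw [Multiset.card_zero, add_zero] at hj
    refine mem_sup_right (subset_span ⟨⟨S, by omega⟩, ?_⟩)
    dsimp only [pivotProd]
    rw [dif_pos hne, show n - S.card = j by omega, add_zero]
  | cons a e ih =>
    intro j hj
    rw [Multiset.add_cons, formProd_cons]
    refine mul_mem_of_mem_span (hspan _ hT a) ?_
    rintro _ ⟨i, hi, rfl⟩
    rcases Finset.mem_insert.1 hi with rfl | hiS
    · have := ih (j + 1) (by simp at hj; omega)
      rwa [Multiset.replicate_succ, Multiset.add_cons, Multiset.cons_add, formProd_cons] at this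
    · rw [Finset.mem_compl] at hiS
      rw [← formProd_cons, ← Multiset.cons_add, ← Multiset.cons_add,
        ← Finset.insert_val_of_notMem hiS, add_assoc]
      refine mem_sup_left (formProd_mem_spanDistinctProds ?_ ?_)
      · rw [Finset.card_insert_of_notMem hiS]; omega
      · rw [Multiset.card_add, Finset.card_val, Finset.card_insert_of_notMem hiS]
        simp at hj ⊢; omega

lemma formProd_add_mem
    (hspan : SpannedByAny 𝕜 ℓ K)
    (hK : K ≤ Fintype.card ι) (hm : m = Fintype.card ι - K + 2) (hmn : m ≤ n)
    (S : Finset ι) (e : Multiset ι) (he : S.card + Multiset.card e = n) :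
    formProd ℓ (S.val + e) ∈ spanDistinctProds 𝕜 ℓ m n ⊔ spanPivotProds 𝕜 ℓ m n := by
  by_cases hSm : m ≤ S.card
  · exact mem_sup_left (formProd_mem_spanDistinctProds hSm (by simpa using he))
  by_cases hS : S.card + 1 = m
  · exact formProd_add_mem_of_card_add_one_eq hspan hK hm hS he
  obtain ⟨a, ha⟩ := Multiset.card_pos_iff_exists_mem.1 (show 0 < Multiset.card e by omega)
  obtain ⟨e, rfl⟩ := Multiset.exists_cons_of_mem ha
  obtain ⟨T, hTS, hT⟩ := Finset.exists_subset_card_eq (s := Sᶜ) (n := K)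
    (by rw [Finset.card_compl]; omega)
  rw [Multiset.add_cons, formProd_cons]
  refine mul_mem_of_mem_span (hspan T hT a) ?_
  rintro _ ⟨i, hi, rfl⟩
  have hiS : i ∉ S := Finset.mem_compl.1 (hTS hi)
  rw [← formProd_cons, ← Multiset.cons_add, ← Finset.insert_val_of_notMem hiS]
  exact formProd_add_mem hspan hK hm hmn (insert i S) e
    (by rw [Finset.card_insert_of_notMem hiS]; simp at he; omega)
termination_by m - S.card
decreasing_by rw [Finset.card_insert_of_notMem hiS]; omega

lemma span_formProd_le
    (hspan : SpannedByAny 𝕜 ℓ K)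
    (hK : K ≤ Fintype.card ι) (hm : m = Fintype.card ι - K + 2) (hmn : m ≤ n) :
    span 𝕜 (formProd ℓ '' {s | Multiset.card s = n}) ≤
      spanDistinctProds 𝕜 ℓ m n ⊔ spanPivotProds 𝕜 ℓ m n := by
  rw [span_le]
  rintro _ ⟨s, hs, rfl⟩
  simpa using formProd_add_mem hspan hK hm hmn ∅ s (by simpa using hs)

end FormProducts

section Monomials

variable {𝕜 σ : Type*} [Field 𝕜] [DecidableEq σ]

lemma formProd_X_eq_monomial (s : Multiset σ) :
    formProd (X : σ → MvPolynomial σ 𝕜) s = monomial (Multiset.toFinsupp s) 1 := by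
  induction s using Multiset.induction_on with
  | empty => simp
  | cons a s ih =>
    rw [formProd_cons, ih, ← Multiset.singleton_add, map_add, Multiset.toFinsupp_singleton, X,
      monomial_mul, one_mul]

lemma linearIndependent_formProd_X (n : ℕ) :
    LinearIndependent 𝕜 fun s : Sym σ n => formProd (X : σ → MvPolynomial σ 𝕜) s := by
  have hinj : Function.Injective fun s : Sym σ n => Multiset.toFinsupp (s : Multiset σ) :=
    Multiset.toFinsupp.injective.comp Sym.coe_injective
  have hfun : (fun s : Sym σ n => formProd (X : σ → MvPolynomial σ 𝕜) s) =
      basisMonomials σ 𝕜 ∘ fun s : Sym σ n => Multiset.toFinsupp (s : Multiset σ) := by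
    funext s
    simp [formProd_X_eq_monomial]
  rw [hfun]
  exact (basisMonomials σ 𝕜).linearIndependent.comp _ hinj

lemma choose_le_finrank_of_span_formProd_le [Fintype σ] {ι : Type*} {ℓ : ι → MvPolynomial σ 𝕜}
    (hX : ∀ j, X j ∈ span 𝕜 (Set.range ℓ)) {n : ℕ} {W : Submodule 𝕜 (MvPolynomial σ 𝕜)}
    [FiniteDimensional 𝕜 W] (hW : span 𝕜 (formProd ℓ '' {s | Multiset.card s = n}) ≤ W) :
    (Fintype.card σ + n - 1).choose n ≤ Module.finrank 𝕜 W := by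
  rw [← Sym.card_sym_eq_choose, ← finrank_span_eq_card (linearIndependent_formProd_X (𝕜 := 𝕜) n)]
  refine Submodule.finrank_mono (span_le.2 ?_)
  rintro _ ⟨s, rfl⟩
  exact hW (by simpa using formProd_mem_span_formProd (𝕜 := 𝕜) ℓ hX (s : Multiset σ))

end Monomials

lemma Multiset.exists_monotone_map_univ_eq {α : Type*} [LinearOrder α] {n : ℕ} (s : Multiset α)
    (hs : Multiset.card s = n) :
    ∃ t : Fin n → α, Monotone t ∧ Finset.univ.val.map t = s := by
  subst hs
  set t := fun i : Fin (Multiset.card s) => s.toList.get (i.cast (by simp))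
  have ht : Finset.univ.val.map t = s := by
    rw [Fin.univ_val_map]
    conv_rhs => rw [← Multiset.coe_toList s]
    congr 1
    apply List.ext_get <;> simp [t]
  refine ⟨t ∘ Tuple.sort t, Tuple.monotone_sort t, ?_⟩
  rw [← Multiset.map_map, Multiset.map_univ_val_equiv, ht]

namespace CPD

variable {K R : ℕ}

noncomputable def colForm (C : Matrix (Fin K) (Fin R) ℝ) (r : Fin R) : MvPolynomial (Fin K) ℝ :=
  Fintype.linearCombination ℝ X (Cᵀ r)

noncomputable def tensorToPoly (K n : ℕ) : ((Fin n → Fin K) → ℝ) →ₗ[ℝ] MvPolynomial (Fin K) ℝ :=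
  Fintype.linearCombination ℝ fun k => ∏ p, X (k p)

lemma tensorToPoly_prod {n : ℕ} (w : Fin n → Fin K → ℝ) :
    tensorToPoly K n (fun k => ∏ p, w p (k p)) = ∏ p, Fintype.linearCombination ℝ X (w p) := by
  simp only [tensorToPoly, Fintype.linearCombination_apply, Fintype.prod_sum, Finset.prod_smul]

lemma tensorToPoly_Sml_col (C : Matrix (Fin K) (Fin R) ℝ) (m l : ℕ) (r : TupleIdx m l R) :
    tensorToPoly K (m + l) ((Sml m l C).col r) = ∏ p, colForm C (r.1 p) := by
  have hcol : (Sml m l C).col r =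
      (1 / ((m + l).factorial : ℝ)) • ∑ σ : Equiv.Perm (Fin (m + l)),
        fun k : Fin (m + l) → Fin K => ∏ p, C (k p) (r.1 (σ p)) := by
    funext k
    rw [Pi.smul_apply, Finset.sum_apply, smul_eq_mul]
    rfl
  have hσ : ∀ σ : Equiv.Perm (Fin (m + l)),
      tensorToPoly K (m + l) (fun k => ∏ p, C (k p) (r.1 (σ p))) = ∏ p, colForm C (r.1 p) :=
    fun σ => (tensorToPoly_prod fun p j => C j (r.1 (σ p))).trans
      (Equiv.prod_comp σ fun p => colForm C (r.1 p))
  rw [hcol, map_smul, map_sum]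
  simp only [hσ, Finset.sum_const, Finset.card_univ, Fintype.card_perm, Fintype.card_fin]
  rw [← Nat.cast_smul_eq_nsmul ℝ, smul_smul, one_div,
    inv_mul_cancel₀ (Nat.cast_ne_zero.2 (Nat.factorial_ne_zero _)), one_smul]

lemma spanDistinctProds_le_map_span_col (C : Matrix (Fin K) (Fin R) ℝ) (m l : ℕ) :
    spanDistinctProds ℝ (colForm C) m (m + l) ≤
      (span ℝ (Set.range (Sml m l C).col)).map (tensorToPoly K (m + l)) := by
  rw [spanDistinctProds, span_le]
  rintro _ ⟨s, ⟨hs, hm⟩, rfl⟩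
  obtain ⟨t, ht, rfl⟩ := s.exists_monotone_map_univ_eq hs
  refine ⟨_, subset_span ⟨⟨t, fun a b hab => ht hab, hm⟩, rfl⟩, ?_⟩
  rw [tensorToPoly_Sml_col]
  simp [formProd, Finset.prod_eq_multiset_prod, Function.comp_def]

lemma linearIndependent_col_of_card_eq_kRank {n : ℕ} (M : Matrix (Fin n) (Fin R) ℝ)
    (s : Finset (Fin R)) (hs : s.card = kRank M) :
    LinearIndependent ℝ fun r : s => Mᵀ r := by
  have hmem : kRank M ∈ {k : ℕ | k ≤ R ∧ ∀ s : Finset (Fin R), s.card = k →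
      LinearIndependent ℝ (fun r : {x // x ∈ s} => Mᵀ (r : Fin R))} :=
    Nat.sSup_mem ⟨0, Nat.zero_le R, fun s hs => by
        rw [Finset.card_eq_zero.1 hs]; exact linearIndependent_empty_type⟩
      ⟨R, fun _ hk => hk.1⟩
  exact hmem.2 s hs

lemma span_colForm_image_of_kRank_eq {C : Matrix (Fin K) (Fin R) ℝ} (hkC : kRank C = K)
    {T : Finset (Fin R)} (hT : T.card = K) :
    span ℝ (colForm C '' T) = LinearMap.range (Fintype.linearCombination ℝ X) := by
  have htop : span ℝ ((fun r => Cᵀ r) '' T) = ⊤ := by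
    rw [Set.image_eq_range]
    exact (linearIndependent_col_of_card_eq_kRank C T (hT.trans hkC.symm))
      |>.span_eq_top_of_card_eq_finrank' (by simp [hT])
  have hcomp : colForm C = Fintype.linearCombination ℝ X ∘ fun r => Cᵀ r := rfl
  rw [hcomp, Set.image_comp, span_image, htop, Submodule.map_top]


lemma spannedByAny_colForm {C : Matrix (Fin K) (Fin R) ℝ} (hkC : kRank C = K) :
    SpannedByAny ℝ (colForm C) K :=
  fun _ hT _ => span_colForm_image_of_kRank_eq hkC hT ▸ LinearMap.mem_range_self _ _

lemma X_mem_span_range_colForm {C : Matrix (Fin K) (Fin R) ℝ} (hKR : K ≤ R) (hkC : kRank C = K)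
    (j : Fin K) : X j ∈ span ℝ (Set.range (colForm C)) := by
  obtain ⟨T, -, hT⟩ := (Finset.univ : Finset (Fin R)).exists_subset_card_eq (n := K) (by simpa)
  refine span_mono (Set.image_subset_range _ (T : Set (Fin R))) ?_
  rw [span_colForm_image_of_kRank_eq hkC hT]
  exact ⟨Pi.single j 1, by simp [Fintype.linearCombination_apply, Pi.single_apply]⟩

/-- lower bound on the rank of `S_{m+l}(C)`. -/
theorem rank_Sml_lower_bound {K R : ℕ} (C : Matrix (Fin K) (Fin R) ℝ)
    (hKR : K ≤ R) (hkC : kRank C = K)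
    (m : ℕ) (hm : m = R - K + 2) (l : ℕ) :
    Nat.choose (R + l + 1) (m + l) - Nat.choose R (m - 1) ≤ (Sml m l C).rank := by
  set W := (span ℝ (Set.range (Sml m l C).col)).map (tensorToPoly K (m + l))
  set P := spanPivotProds ℝ (colForm C) m (m + l)
  have hle : span ℝ (formProd (colForm C) '' {s | Multiset.card s = m + l}) ≤ W ⊔ P :=
    (span_formProd_le (spannedByAny_colForm hkC) (by simpa) (by simpa using hm) (by omega)).trans
      (sup_le_sup_right (spanDistinctProds_le_map_span_col C m l) _)
  have hmonomials : (R + l + 1).choose (m + l) ≤ Module.finrank ℝ ↥(W ⊔ P) := by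
    have := choose_le_finrank_of_span_formProd_le (X_mem_span_range_colForm hKR hkC) hle
    rwa [Fintype.card_fin, show K + (m + l) - 1 = R + l + 1 by omega] at this
  have hsup := finrank_add_le_finrank_add_finrank W P
  have hW : Module.finrank ℝ W ≤ (Sml m l C).rank :=
    (finrank_map_le _ _).trans_eq (Matrix.rank_eq_finrank_span_cols _).symm
  have hP : Module.finrank ℝ P ≤ R.choose (m - 1) := by
    simpa using finrank_spanPivotProds_le (𝕜 := ℝ) (colForm C) m (m + l)
  omega

end CPD
end
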